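/- arXiv:2106.05355 — 2 statements merged into one kernel-verified Lean document; each statement's English description precedes it below -/
import Mathlib

section
/- Let n > 2k and B := A_k(n,k) as above. For every set D ⊆ [k+2,n] with 0 ≤ |D| ≤ k-2, the set {1} ∪ D belongs to D(B) \ D(S_1). Consequently |D(B) \ D(S_1)| ≥ ∑_{ℓ=0}^{k-2} C(n-k-1, ℓ). -/
open Finset

/-! Given `D`, pad it with a set `E ⊆ [2, k+1]` of size `k - 1 - |D|` (nonempty as `|D| ≤ k - 2`):
then `A = {1} ∪ D ∪ E ∈ A_k(n, k)` and `A \ [2, k+1] = {1} ∪ D`. No difference `F \ F'` of two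
members of the star contains `1`, since `F'` does. The bound counts the sets `D` by size. -/

def diffFam (F : Finset (Finset ℕ)) : Finset (Finset ℕ) :=
  (F ×ˢ F).image fun p => p.1 \ p.2

def fullStar1 (n k : ℕ) : Finset (Finset ℕ) :=
  ((Finset.Icc 1 n).powersetCard k).filter fun A => 1 ∈ A

def famAk (n k : ℕ) : Finset (Finset ℕ) :=
  (((Finset.Icc 1 n).powersetCard k).filter fun A =>
      1 ∈ A ∧ (A ∩ Finset.Icc 2 (k + 1)).Nonempty) ∪ {Finset.Icc 2 (k + 1)}

theorem mem_diffFam {F : Finset (Finset ℕ)} {X : Finset ℕ} :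
    X ∈ diffFam F ↔ ∃ A ∈ F, ∃ B ∈ F, A \ B = X := by
  simp [diffFam, and_assoc]

theorem notMem_diffFam_of_forall_mem {F : Finset (Finset ℕ)} {a : ℕ} {X : Finset ℕ}
    (hF : ∀ A ∈ F, a ∈ A) (hX : a ∈ X) : X ∉ diffFam F := by
  intro h
  obtain ⟨A, -, B, hB, rfl⟩ := mem_diffFam.1 h
  exact (mem_sdiff.1 hX).2 (hF B hB)

theorem insert_union_sdiff_of_subset {α : Type*} [DecidableEq α] {a : α} {D E S : Finset α}
    (ha : a ∉ S) (hD : Disjoint D S) (hE : E ⊆ S) : insert a (D ∪ E) \ S = insert a D := by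
  rw [insert_sdiff_of_notMem _ ha, union_sdiff_distrib, sdiff_eq_empty_iff_subset.2 hE,
    union_empty, hD.sdiff_eq_left]

theorem Icc_mem_famAk (n k : ℕ) : Icc 2 (k + 1) ∈ famAk n k :=
  mem_union_right _ (mem_singleton_self _)

theorem insert_one_union_mem_famAk {n k : ℕ} {D E : Finset ℕ} (hkn : k + 1 ≤ n)
    (hD : D ⊆ Icc (k + 2) n) (hE : E ⊆ Icc 2 (k + 1)) (hE₀ : E.Nonempty)
    (hcard : D.card + E.card + 1 = k) : insert 1 (D ∪ E) ∈ famAk n k := by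
  have hD' : ∀ x ∈ D, k + 2 ≤ x ∧ x ≤ n := fun x hx => mem_Icc.1 (hD hx)
  have hE' : ∀ x ∈ E, 2 ≤ x ∧ x ≤ k + 1 := fun x hx => mem_Icc.1 (hE hx)
  have h1 : 1 ∉ D ∪ E := by
    simp only [mem_union, not_or]
    exact ⟨fun h => by have := hD' 1 h; omega, fun h => by have := hE' 1 h; omega⟩
  have hDE : Disjoint D E :=
    disjoint_left.2 fun x hxD hxE => by have := hD' x hxD; have := hE' x hxE; omega
  refine mem_union_left _ (mem_filter.2 ⟨mem_powersetCard.2 ⟨?_, ?_⟩, mem_insert_self _ _, ?_⟩)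
  · intro x hx
    rw [mem_Icc]
    rcases mem_insert.1 hx with rfl | hx
    · omega
    rcases mem_union.1 hx with hx | hx
    · have := hD' x hx; omega
    · have := hE' x hx; omega
  · rw [card_insert_of_notMem h1, card_union_of_disjoint hDE, hcard]
  · obtain ⟨x, hx⟩ := hE₀
    exact ⟨x, mem_inter.2 ⟨mem_insert_of_mem (mem_union_right _ hx), hE hx⟩⟩

theorem insert_one_mem_diffFam_famAk {n k : ℕ} {D : Finset ℕ} (hk : 2 ≤ k) (hkn : k + 1 ≤ n)
    (hD : D ⊆ Icc (k + 2) n) (hcard : D.card ≤ k - 2) : insert 1 D ∈ diffFam (famAk n k) := by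
  obtain ⟨E, hE, hEcard⟩ :=
    exists_subset_card_eq (s := Icc 2 (k + 1)) (n := k - 1 - D.card) (by rw [Nat.card_Icc]; omega)
  have hE₀ : E.Nonempty := card_pos.1 (by omega)
  have hDdisj : Disjoint D (Icc 2 (k + 1)) :=
    disjoint_left.2 fun x hx hx' => by
      have := mem_Icc.1 (hD hx); have := mem_Icc.1 hx'; omega
  exact mem_diffFam.2 ⟨_, insert_one_union_mem_famAk hkn hD hE hE₀ (by omega), _,
    Icc_mem_famAk n k, insert_union_sdiff_of_subset (by simp) hDdisj hE⟩

theorem sum_choose_le_card_of_insert_mem {α : Type*} [DecidableEq α] {a : α} {s : Finset α}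
    {t : Finset (Finset α)} (ha : a ∉ s) (m : ℕ) (h : ∀ D ⊆ s, D.card < m → insert a D ∈ t) :
    ∑ ℓ ∈ range m, s.card.choose ℓ ≤ t.card := by
  set T := (range m).biUnion fun ℓ => s.powersetCard ℓ
  have hT : ∀ D ∈ T, D ⊆ s ∧ D.card < m := by
    intro D hD
    obtain ⟨ℓ, hℓ, hD⟩ := mem_biUnion.1 hD
    obtain ⟨hDs, rfl⟩ := mem_powersetCard.1 hD
    exact ⟨hDs, mem_range.1 hℓ⟩
  have hTcard : T.card = ∑ ℓ ∈ range m, s.card.choose ℓ := by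
    rw [card_biUnion (s.pairwise_disjoint_powersetCard.set_pairwise _)]
    simp only [card_powersetCard]
  rw [← hTcard]
  refine card_le_card_of_injOn (insert a) (fun D hD => h D (hT D hD).1 (hT D hD).2) ?_
  intro D₁ hD₁ D₂ hD₂ heq
  have ha₁ : a ∉ D₁ := fun h => ha ((hT D₁ hD₁).1 h)
  have ha₂ : a ∉ D₂ := fun h => ha ((hT D₂ hD₂).1 h)
  rw [← erase_insert ha₁, ← erase_insert ha₂]
  exact congrArg (erase · a) heq

theorem stmt7 (n k : ℕ) (hk : 2 ≤ k) (hn : 2 * k < n) :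
    (∀ D : Finset ℕ, D ⊆ Finset.Icc (k + 2) n → D.card ≤ k - 2 →
      insert 1 D ∈ diffFam (famAk n k) \ diffFam (fullStar1 n k)) ∧
    ∑ ℓ ∈ Finset.range (k - 1), (n - k - 1).choose ℓ ≤
      (diffFam (famAk n k) \ diffFam (fullStar1 n k)).card := by
  have hmem : ∀ D : Finset ℕ, D ⊆ Icc (k + 2) n → D.card ≤ k - 2 →
      insert 1 D ∈ diffFam (famAk n k) \ diffFam (fullStar1 n k) := fun D hD hcard =>
    mem_sdiff.2 ⟨insert_one_mem_diffFam_famAk hk (by omega) hD hcard,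
      notMem_diffFam_of_forall_mem (fun A hA => (mem_filter.1 hA).2) (mem_insert_self 1 D)⟩
  refine ⟨hmem, ?_⟩
  have hcount := sum_choose_le_card_of_insert_mem (a := 1) (s := Icc (k + 2) n) (by simp) (k - 1)
    fun D hD hcard => hmem D hD (by omega)
  rwa [Nat.card_Icc, show n + 1 - (k + 2) = n - k - 1 by omega] at hcount
end

section
/- Let n ≥ a + b. If A ⊆ binom([n], a) and B ⊆ binom([n], b) are cross-intersecting (every A ∈ A meets every B ∈ B) and |A| ≥ C(x, n-a) for some real x with n-a ≤ x ≤ n, then |B| ≤ C(n, b) − C(x, b). -/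
/-!
By Katona's observation, `𝒜` and `ℬ` are cross-intersecting iff `ℬ` avoids the `(n - a - b)`-th
shadow of the family of complements `𝒜ᶜˢ`, whose members have `n - a` elements. Lovász's form of
Kruskal–Katona (`|𝒜| ≥ C(x, k)` implies `|∂𝒜| ≥ C(x, k - 1)` for real `x ≥ k`), iterated, bounds
that shadow below by `C(x, b)`, and it shares the `C(n, b)` sets of size `b` with `ℬ`.

Lovász's bound follows Frankl. By Kruskal–Katona we may replace `𝒜` by a colex initial segment `𝒞`
of the same size, which is shifted towards the least element `z`. Let `𝒞₀` be the sets avoiding `z`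
and `𝒞₁` the sets containing `z`, with `z` removed. Shiftedness gives `∂𝒞₀ ⊆ 𝒞₁`, from which
`|𝒞₁| ≥ C(x - 1, k - 1)` by induction on `|𝒞|`; then by induction on `k`,
`|∂𝒞| ≥ |𝒞₁| + |∂𝒞₁| ≥ C(x - 1, k - 1) + C(x - 1, k - 2) = C(x, k - 1)`.
-/

open Finset

noncomputable def genChoose (x : ℝ) (k : ℕ) : ℝ :=
  (∏ i ∈ Finset.range k, (x - i)) / (Nat.factorial k)

open scoped Nat FinsetFamily

lemma genChoose_eq_eval_descPochhammer (x : ℝ) (k : ℕ) :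
    genChoose x k = (descPochhammer ℝ k).eval x / k ! := by
  rw [genChoose, descPochhammer_eval_eq_prod_range]

@[simp] lemma genChoose_zero (x : ℝ) : genChoose x 0 = 1 := by simp [genChoose]

@[simp] lemma genChoose_natCast_self (k : ℕ) : genChoose k k = 1 := by
  rw [genChoose_eq_eval_descPochhammer, descPochhammer_eval_eq_descFactorial,
    Nat.descFactorial_self, div_self (by positivity)]

lemma genChoose_nonneg {x : ℝ} {k : ℕ} (hx : (k : ℝ) - 1 ≤ x) : 0 ≤ genChoose x k := by
  rw [genChoose_eq_eval_descPochhammer]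
  exact div_nonneg (descPochhammer_nonneg hx) (by positivity)

lemma genChoose_le_genChoose {x y : ℝ} {k : ℕ} (hx : (k : ℝ) - 1 ≤ x) (hxy : x ≤ y) :
    genChoose x k ≤ genChoose y k := by
  simp only [genChoose_eq_eval_descPochhammer]
  gcongr
  exact monotoneOn_descPochhammer_eval k hx (hx.trans hxy) hxy

lemma one_le_genChoose {x : ℝ} {k : ℕ} (hx : (k : ℝ) ≤ x) : 1 ≤ genChoose x k := by
  simpa using genChoose_le_genChoose (k := k) (by linarith) hx

lemma genChoose_le_one {x : ℝ} {k : ℕ} (hx : (k : ℝ) - 1 ≤ x) (hxk : x ≤ k) :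
    genChoose x k ≤ 1 := by
  simpa using genChoose_le_genChoose hx hxk

lemma genChoose_succ_succ (x : ℝ) (k : ℕ) :
    genChoose (x + 1) (k + 1) = genChoose x k + genChoose x (k + 1) := by
  have hshift :
      (descPochhammer ℝ (k + 1)).eval (x + 1) = (x + 1) * (descPochhammer ℝ k).eval x := by
    simp [descPochhammer_succ_left]
  simp only [genChoose_eq_eval_descPochhammer, hshift, descPochhammer_succ_eval,
    Nat.factorial_succ]
  push_cast
  field_simp
  ring

namespace Finset

section MemberSubfamily
variable {α : Type*} [DecidableEq α] {𝒜 : Finset (Finset α)} {a : α} {r : ℕ}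

lemma _root_.Set.Sized.memberSubfamily (h𝒜 : (𝒜 : Set (Finset α)).Sized (r + 1)) :
    (𝒜.memberSubfamily a : Set (Finset α)).Sized r := by
  intro s hs
  obtain ⟨hs, has⟩ := mem_memberSubfamily.1 hs
  simpa [card_insert_of_notMem has] using h𝒜 hs

lemma shadow_memberSubfamily_subset (𝒜 : Finset (Finset α)) (a : α) :
    ∂ (𝒜.memberSubfamily a) ⊆ (∂ 𝒜).memberSubfamily a := by
  intro t ht
  obtain ⟨s, hs, b, hb, rfl⟩ := mem_shadow_iff.1 ht
  obtain ⟨hs, has⟩ := mem_memberSubfamily.1 hs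
  have hab : a ≠ b := fun hab => has (hab ▸ hb)
  refine mem_memberSubfamily.2 ⟨?_, fun h => has (mem_of_mem_erase h)⟩
  rw [← erase_insert_of_ne hab]
  exact erase_mem_shadow hs (mem_insert_of_mem hb)

lemma memberSubfamily_subset_nonMemberSubfamily_shadow (𝒜 : Finset (Finset α)) (a : α) :
    𝒜.memberSubfamily a ⊆ (∂ 𝒜).nonMemberSubfamily a := by
  intro s hs
  obtain ⟨hs, has⟩ := mem_memberSubfamily.1 hs
  refine mem_nonMemberSubfamily.2 ⟨?_, has⟩
  simpa [erase_insert has] using erase_mem_shadow hs (mem_insert_self a s)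

lemma card_memberSubfamily_add_card_shadow_le (𝒜 : Finset (Finset α)) (a : α) :
    #(𝒜.memberSubfamily a) + #(∂ (𝒜.memberSubfamily a)) ≤ #(∂ 𝒜) := by
  rw [← card_memberSubfamily_add_card_nonMemberSubfamily a (∂ 𝒜), add_comm]
  exact add_le_add (card_le_card (shadow_memberSubfamily_subset 𝒜 a))
    (card_le_card (memberSubfamily_subset_nonMemberSubfamily_shadow 𝒜 a))

end MemberSubfamily

namespace Colex
variable {α : Type*} [LinearOrder α] {𝒞 : Finset (Finset α)} {r : ℕ}

lemma IsInitSeg.insert_erase_mem {s : Finset α} {a z : α} (h : IsInitSeg 𝒞 r) (hs : s ∈ 𝒞)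
    (ha : a ∈ s) (hz : z ∉ s) (hza : z < a) : insert z (s.erase a) ∈ 𝒞 := by
  refine h.2 hs ⟨?_, ?_⟩
  · rw [toColex_lt_toColex_iff_exists_forall_lt]
    refine ⟨a, ha, by simp [hza.ne'], fun b hb hbs => ?_⟩
    rcases mem_insert.1 hb with rfl | hb
    · exact hza
    · exact absurd (mem_of_mem_erase hb) hbs
  · have hs₀ := card_pos.2 ⟨a, ha⟩
    rw [card_insert_of_notMem (fun h => hz (mem_of_mem_erase h)), card_erase_of_mem ha, ← h.1 hs]
    omega

lemma IsInitSeg.shadow_nonMemberSubfamily_subset {z : α} (h : IsInitSeg 𝒞 r) (hz : IsBot z) :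
    ∂ (𝒞.nonMemberSubfamily z) ⊆ 𝒞.memberSubfamily z := by
  intro t ht
  obtain ⟨s, hs, a, ha, rfl⟩ := mem_shadow_iff.1 ht
  obtain ⟨hs, hzs⟩ := mem_nonMemberSubfamily.1 hs
  have hza : z < a := (hz a).lt_of_ne (ne_of_mem_of_not_mem ha hzs).symm
  exact mem_memberSubfamily.2
    ⟨h.insert_erase_mem hs ha hzs hza, fun h => hzs (mem_of_mem_erase h)⟩

lemma IsInitSeg.memberSubfamily_nonempty {z : α} (h : IsInitSeg 𝒞 (r + 1)) (hz : IsBot z)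
    (hne : 𝒞.Nonempty) : (𝒞.memberSubfamily z).Nonempty := by
  obtain ⟨s, hs⟩ := hne
  obtain ⟨a, ha⟩ : s.Nonempty := card_pos.1 (by rw [h.1 hs]; omega)
  by_cases hzs : z ∈ s
  · exact ⟨s.erase z, mem_memberSubfamily.2 ⟨by rwa [insert_erase hzs], notMem_erase _ _⟩⟩
  · exact ⟨s.erase a, h.shadow_nonMemberSubfamily_subset hz
      (erase_mem_shadow (mem_nonMemberSubfamily.2 ⟨hs, hzs⟩) ha)⟩

lemma IsInitSeg.exists_card_eq (h : IsInitSeg 𝒞 r) {m : ℕ} (hm : m ≤ #𝒞) :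
    ∃ 𝒟 : Finset (Finset α), IsInitSeg 𝒟 r ∧ #𝒟 = m := by
  induction 𝒞 using strongInduction with
  | H 𝒞 ih =>
    obtain hm | hm := hm.eq_or_lt
    · exact ⟨𝒞, h, hm.symm⟩
    obtain ⟨s, hs, hmax⟩ := exists_max_image 𝒞 toColex (card_pos.1 (by omega))
    refine ih _ (erase_ssubset hs) ⟨h.1.mono (erase_subset _ _), fun t u ht hu => ?_⟩ ?_
    · obtain ⟨hts, ht⟩ := mem_erase.1 ht
      exact mem_erase.2 ⟨fun hus => (hu.1.trans_le (hmax t ht)).ne (congrArg _ hus), h.2 ht hu⟩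
    · rw [card_erase_of_mem hs]
      omega

lemma exists_isInitSeg_card_eq {n : ℕ} {𝒜 : Finset (Finset (Fin n))}
    (h𝒜 : (𝒜 : Set (Finset (Fin n))).Sized r) :
    ∃ 𝒞 : Finset (Finset (Fin n)), IsInitSeg 𝒞 r ∧ #𝒞 = #𝒜 := by
  have hall : IsInitSeg (powersetCard r univ : Finset (Finset (Fin n))) r :=
    ⟨Set.sized_powersetCard _ _, fun _ _ _ ht => mem_powersetCard_univ.2 ht.2⟩
  exact hall.exists_card_eq (card_le_card fun s hs => mem_powersetCard_univ.2 (h𝒜 hs))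

end Colex

theorem genChoose_le_card_shadow {n : ℕ} (k : ℕ) {𝒜 : Finset (Finset (Fin n))} {x : ℝ}
    (h𝒜 : (𝒜 : Set (Finset (Fin n))).Sized (k + 1)) (hne : 𝒜.Nonempty) (hx : (k : ℝ) ≤ x)
    (hc : genChoose x (k + 1) ≤ #𝒜) : genChoose x k ≤ #(∂ 𝒜) := by
  induction k generalizing 𝒜 x with
  | zero =>
    obtain ⟨s, hs⟩ := hne
    obtain ⟨a, ha⟩ : s.Nonempty := card_pos.1 (by rw [h𝒜 hs]; exact Nat.one_pos)
    simpa using card_pos.2 ⟨_, erase_mem_shadow hs ha⟩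
  | succ k ihk =>
    induction hm : #𝒜 using Nat.strong_induction_on generalizing 𝒜 x with
    | _ m ihm =>
    push_cast at hx
    obtain ⟨𝒞, h𝒞, h𝒞𝒜⟩ := Colex.exists_isInitSeg_card_eq h𝒜
    have hshadow : #(∂ 𝒞) ≤ #(∂ 𝒜) := kruskal_katona h𝒜 h𝒞𝒜.le h𝒞
    obtain ⟨s, hs⟩ := hne
    obtain ⟨a, -⟩ : s.Nonempty := card_pos.1 (by rw [h𝒜 hs]; omega)
    let z : Fin n := ⟨0, a.pos⟩
    have hz : IsBot z := fun _ => Nat.zero_le _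
    set 𝒞₀ := 𝒞.nonMemberSubfamily z
    set 𝒞₁ := 𝒞.memberSubfamily z
    have hsplit : #𝒞₁ + #𝒞₀ = #𝒞 := card_memberSubfamily_add_card_nonMemberSubfamily z 𝒞
    have hsub : ∂ 𝒞₀ ⊆ 𝒞₁ := h𝒞.shadow_nonMemberSubfamily_subset hz
    have hne₁ : 𝒞₁.Nonempty :=
      h𝒞.memberSubfamily_nonempty hz (card_pos.1 (h𝒞𝒜 ▸ card_pos.2 ⟨s, hs⟩))
    have hpascal (j : ℕ) :
        genChoose x (j + 1) = genChoose (x - 1) j + genChoose (x - 1) (j + 1) := by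
      simpa using genChoose_succ_succ (x - 1) j
    have hbig₁ : genChoose (x - 1) (k + 1) ≤ #𝒞₁ := by
      obtain hxk | hxk := lt_or_ge x (k + 2)
      · refine (genChoose_le_one ?_ ?_).trans (by exact_mod_cast hne₁.card_pos) <;>
          push_cast <;> linarith
      -- Otherwise `𝒞₀` is large, hence so is its shadow, which lies in `𝒞₁`.
      by_contra! hsmall
      have hsplit' : (#𝒞₁ : ℝ) + #𝒞₀ = #𝒜 := by exact_mod_cast hsplit.trans h𝒞𝒜
      have hbig₀ : genChoose (x - 1) (k + 2) < #𝒞₀ := by linarith [hpascal (k + 1)]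
      have hne₀ : 𝒞₀.Nonempty := card_pos.1 (by
        exact_mod_cast (genChoose_nonneg (by push_cast; linarith)).trans_lt hbig₀)
      have hlt : #𝒞₀ < m := by
        rw [← hm, ← h𝒞𝒜, ← hsplit]
        exact Nat.lt_add_of_pos_left hne₁.card_pos
      have := ihm #𝒞₀ hlt (𝒜 := 𝒞₀) (h𝒞.1.mono fun t ht => (mem_nonMemberSubfamily.1 ht).1) hne₀
        (by push_cast at hxk ⊢; linarith) hbig₀.le rfl
      have : (#(∂ 𝒞₀) : ℝ) ≤ #𝒞₁ := by exact_mod_cast card_le_card hsub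
      linarith
    calc genChoose x (k + 1) = genChoose (x - 1) (k + 1) + genChoose (x - 1) k := by
          rw [hpascal, add_comm]
      _ ≤ #𝒞₁ + #(∂ 𝒞₁) := add_le_add hbig₁
          (ihk h𝒞.1.memberSubfamily hne₁ (by linarith) hbig₁)
      _ ≤ #(∂ 𝒜) := by exact_mod_cast (card_memberSubfamily_add_card_shadow_le 𝒞 z).trans hshadow

theorem genChoose_le_card_shadow_iterate {n r i : ℕ} {𝒜 : Finset (Finset (Fin n))} {x : ℝ}
    (h𝒜 : (𝒜 : Set (Finset (Fin n))).Sized r) (hx : (r : ℝ) ≤ x) (hc : genChoose x r ≤ #𝒜)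
    (hi : i ≤ r) : genChoose x (r - i) ≤ #(∂^[i] 𝒜) := by
  induction i with
  | zero => simpa using hc
  | succ i ih =>
    have hri : r - i = r - (i + 1) + 1 := by omega
    have ih := ih (by omega)
    have hne : (∂^[i] 𝒜).Nonempty := card_pos.1 <| by
      have := one_le_genChoose ((Nat.cast_le.2 (Nat.sub_le r i)).trans hx)
      exact_mod_cast zero_lt_one.trans_le (this.trans ih)
    rw [hri] at ih
    have hsized := h𝒜.shadow_iterate (k := i)
    rw [hri] at hsized
    have hxr : ((r - (i + 1) : ℕ) : ℝ) ≤ x := (Nat.cast_le.2 (Nat.sub_le _ _)).trans hx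
    rw [Function.iterate_succ_apply']
    exact genChoose_le_card_shadow _ hsized hne hxr ih

lemma disjoint_shadow_iterate_compls {α : Type*} [Fintype α] [DecidableEq α]
    {𝒜 ℬ : Finset (Finset α)} (h : ∀ s ∈ 𝒜, ∀ t ∈ ℬ, (s ∩ t).Nonempty) (k : ℕ) :
    Disjoint ℬ (∂^[k] 𝒜ᶜˢ) := by
  refine disjoint_left.2 fun t ht htk => ?_
  obtain ⟨u, hu, htu, -⟩ := mem_shadow_iterate_iff_exists_sdiff.1 htk
  obtain ⟨y, hy⟩ := h _ (mem_compls.1 hu) t ht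
  obtain ⟨hyu, hyt⟩ := mem_inter.1 hy
  exact mem_compl.1 hyu (htu hyt)

theorem card_le_choose_sub_genChoose {n a b : ℕ} (hab : a + b ≤ n)
    {𝒜 ℬ : Finset (Finset (Fin n))} (h𝒜 : (𝒜 : Set (Finset (Fin n))).Sized a)
    (hℬ : (ℬ : Set (Finset (Fin n))).Sized b) (hcross : ∀ s ∈ 𝒜, ∀ t ∈ ℬ, (s ∩ t).Nonempty)
    {x : ℝ} (hx : (n : ℝ) - a ≤ x) (hc : genChoose x (n - a) ≤ #𝒜) :
    (#ℬ : ℝ) ≤ n.choose b - genChoose x b := by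
  have hcompl : (𝒜ᶜˢ : Set (Finset (Fin n))).Sized (n - a) := by simpa using h𝒜.compls
  have hba : n - a - (n - a - b) = b := by omega
  have hshadow : genChoose x b ≤ #(∂^[n - a - b] 𝒜ᶜˢ) := by
    have := genChoose_le_card_shadow_iterate hcompl (x := x) (by rwa [Nat.cast_sub (by omega)])
      (by rwa [card_compls]) (Nat.sub_le (n - a) b)
    rwa [hba] at this
  have hsized := hcompl.shadow_iterate (k := n - a - b)
  rw [hba] at hsized
  have hunion : #ℬ + #(∂^[n - a - b] 𝒜ᶜˢ) ≤ n.choose b := by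
    rw [← card_union_of_disjoint (disjoint_shadow_iterate_compls hcross _)]
    simpa using card_le_card (union_subset (fun t ht => mem_powersetCard_univ.2 (hℬ ht))
      fun t ht => mem_powersetCard_univ.2 (hsized ht))
  have : (#ℬ : ℝ) + #(∂^[n - a - b] 𝒜ᶜˢ) ≤ n.choose b := by exact_mod_cast hunion
  linarith

lemma exists_map_mapEmbedding_eq {α β : Type*} {e : α ↪ β} {u : Finset α}
    {A : Finset (Finset β)} (h : ∀ S ∈ A, S ⊆ u.map e) :
    ∃ 𝒜 : Finset (Finset α), 𝒜.map (mapEmbedding e).toEmbedding = A := by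
  have : A ⊆ u.powerset.map (mapEmbedding e).toEmbedding := fun S hS => by
    obtain ⟨v, hv, rfl⟩ := subset_map_iff.1 (h S hS)
    exact mem_map_of_mem _ (mem_powerset.2 hv)
  obtain ⟨𝒜, -, h𝒜⟩ := subset_map_iff.1 this
  exact ⟨𝒜, h𝒜.symm⟩

end Finset

theorem stmt13_general (n a b : ℕ) (hn : a + b ≤ n)
    (A : Finset (Finset ℕ)) (B : Finset (Finset ℕ))
    (hA : A ⊆ (Finset.Icc 1 n).powersetCard a)
    (hB : B ⊆ (Finset.Icc 1 n).powersetCard b)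
    (hcross : ∀ S ∈ A, ∀ T ∈ B, (S ∩ T).Nonempty)
    (x : ℝ) (hx1 : ((n : ℝ) - a) ≤ x)
    (hAcard : genChoose x (n - a) ≤ (A.card : ℝ)) :
    (B.card : ℝ) ≤ (n.choose b : ℝ) - genChoose x b := by
  set e : Fin n ↪ ℕ := Fin.valEmbedding.trans (addRightEmbedding 1)
  have he : univ.map e = Icc 1 n := by
    ext m
    simp only [mem_map, mem_univ, true_and, mem_Icc]
    exact ⟨by rintro ⟨i, rfl⟩; simp [e], fun hm => ⟨⟨m - 1, by omega⟩, by simp [e]; omega⟩⟩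
  obtain ⟨𝒜, rfl⟩ := exists_map_mapEmbedding_eq (e := e) (u := univ) fun S hS =>
    he ▸ (mem_powersetCard.1 (hA hS)).1
  obtain ⟨ℬ, rfl⟩ := exists_map_mapEmbedding_eq (e := e) (u := univ) fun S hS =>
    he ▸ (mem_powersetCard.1 (hB hS)).1
  rw [card_map] at hAcard ⊢
  refine card_le_choose_sub_genChoose hn (fun s hs => ?_) (fun t ht => ?_)
    (fun s hs t ht => ?_) hx1 hAcard
  · simpa using (mem_powersetCard.1 (hA (mem_map_of_mem _ hs))).2
  · simpa using (mem_powersetCard.1 (hB (mem_map_of_mem _ ht))).2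
  · simpa [← map_inter] using hcross _ (mem_map_of_mem _ hs) _ (mem_map_of_mem _ ht)

theorem stmt13 (n a b : ℕ) (hn : a + b ≤ n)
    (A : Finset (Finset ℕ)) (B : Finset (Finset ℕ))
    (hA : A ⊆ (Finset.Icc 1 n).powersetCard a)
    (hB : B ⊆ (Finset.Icc 1 n).powersetCard b)
    (hcross : ∀ S ∈ A, ∀ T ∈ B, (S ∩ T).Nonempty)
    (x : ℝ) (hx1 : ((n : ℝ) - a) ≤ x) (hx2 : x ≤ (n : ℝ))
    (hAcard : genChoose x (n - a) ≤ (A.card : ℝ)) :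
    (B.card : ℝ) ≤ (n.choose b : ℝ) - genChoose x b :=
  stmt13_general n a b hn A B hA hB hcross x hx1 hAcard
end
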